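/- arXiv:2003.13384 — 5 statements merged into one kernel-verified Lean document; each statement's English description precedes it below -/
import Mathlib

section
/- Let V, W be finite-dimensional vector spaces, ρ : W → V linear, D_ρ the derivation of Λ•(V ⊕ W) with D_ρ(X,u) = (ρ(u), 0), and inv* the algebra automorphism of Λ•(V ⊕ W) extending the linear map (X,u) ↦ (X+ρ(u), −u). Then for every ω ∈ (Λ^p V) ⊗ (Λ^q W): inv*(ω) = (−1)^q ( ω − D_ρ ω + (1/2!) D_ρ² ω + ⋯ + ((−1)^q/q!) D_ρ^q ω ) = (−1)^q Σ_{j=0}^{q} ((−1)^j/j!) D_ρ^j ω. -/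
open ExteriorAlgebra Finset

/-- The subspace `(Λ^p V) ⊗ (Λ^q W) ⊆ Λ^{p+q}(V ⊕ W)`. -/
noncomputable def mixedPiece (V W : Type*) [AddCommGroup V] [Module ℝ V]
    [AddCommGroup W] [Module ℝ W] (p q : ℕ) :
    Submodule ℝ (ExteriorAlgebra ℝ (V × W)) :=
  Submodule.span ℝ { z | ∃ (X : Fin p → V) (u : Fin q → W),
    z = (List.ofFn fun i => ExteriorAlgebra.ι ℝ ((X i, (0 : W)) : V × W)).prod *
        (List.ofFn fun j => ExteriorAlgebra.ι ℝ (((0 : V), u j) : V × W)).prod }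

/-!
Horizontal generators `ι (X, 0)` are fixed by `inv*` and killed by `D`, while a vertical
generator `v = ι (0, u)` has `D v = ι (ρ u, 0)`, `D² v = 0` and `inv* v = -(v - D v) = -exp(-D) v`.
Since `D` is a derivation, `exp(-D)` is multiplicative, so `inv*` and `(-1)^q exp(-D)` agree on
`a * v₁ ⋯ v_q`; as `D^(q+1)` kills such a product, the exponential series stops at degree `q`.
-/

section Leibniz
variable {R A : Type*} [CommSemiring R] [Ring A] [Module R A] {D : Module.End R A}

variable (D) in
def IsLeibniz : Prop := ∀ a b : A, D (a * b) = D a * b + a * D b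

lemma IsLeibniz.apply_one (hD : IsLeibniz D) : D 1 = 0 := by
  simpa using hD 1 1

lemma IsLeibniz.apply_list_prod_eq_zero (hD : IsLeibniz D) {l : List A}
    (hl : ∀ x ∈ l, D x = 0) : D l.prod = 0 := by
  induction l with
  | nil => exact hD.apply_one
  | cons x l ih =>
    rw [List.prod_cons, hD, hl x List.mem_cons_self,
      ih fun y hy => hl y (List.mem_cons_of_mem x hy), zero_mul, mul_zero, add_zero]

lemma IsLeibniz.pow_succ_apply_mul (hD : IsLeibniz D) {v w : A} (hv : D v = w) (hw : D w = 0)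
    (b : A) (j : ℕ) :
    (D ^ (j + 1)) (b * v) = (D ^ (j + 1)) b * v + (j + 1) • ((D ^ j) b * w) := by
  induction j with
  | zero => simp [hD _ _, hv]
  | succ j ih =>
    rw [pow_succ', Module.End.mul_apply, ih, map_add, map_nsmul, hD, hD, hv, hw, mul_zero,
      add_zero, ← Module.End.mul_apply, ← pow_succ', ← Module.End.mul_apply, ← pow_succ',
      add_assoc, ← succ_nsmul']

lemma IsLeibniz.pow_add_two_apply_mul_eq_zero (hD : IsLeibniz D) {v w : A} (hv : D v = w)
    (hw : D w = 0) {b : A} {n : ℕ} (hb : (D ^ (n + 1)) b = 0) : (D ^ (n + 2)) (b * v) = 0 := by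
  rw [hD.pow_succ_apply_mul hv hw, pow_succ', Module.End.mul_apply, hb, map_zero, zero_mul,
    zero_add, zero_mul, smul_zero]

end Leibniz

section TruncExpNeg
variable {𝕜 A : Type*} [Field 𝕜] [Ring A] [Algebra 𝕜 A] {D : Module.End 𝕜 A}

variable (D) in
/-- `exp (-D)` truncated after degree `n`; it agrees with `exp (-D)` on `ker D^(n+1)`. -/
noncomputable def truncExpNeg (n : ℕ) : Module.End 𝕜 A :=
  ∑ j ∈ range (n + 1), ((-1 : 𝕜) ^ j / j.factorial) • D ^ j

lemma truncExpNeg_apply (n : ℕ) (x : A) :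
    truncExpNeg D n x = ∑ j ∈ range (n + 1), ((-1 : 𝕜) ^ j / j.factorial) • (D ^ j) x := by
  simp [truncExpNeg, LinearMap.sum_apply]

lemma truncExpNeg_zero_apply (x : A) : truncExpNeg D 0 x = x := by
  simp [truncExpNeg_apply]

lemma neg_one_pow_div_factorial_succ_mul [CharZero 𝕜] (j : ℕ) :
    (-1 : 𝕜) ^ (j + 1) / (j + 1).factorial * (j + 1) = -((-1) ^ j / j.factorial) := by
  rw [Nat.factorial_succ]
  push_cast
  field_simp
  ring

lemma IsLeibniz.truncExpNeg_succ_mul [CharZero 𝕜] (hD : IsLeibniz D) {v w : A} (hv : D v = w)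
    (hw : D w = 0) {b : A} {n : ℕ} (hb : (D ^ (n + 1)) b = 0) :
    truncExpNeg D (n + 1) (b * v) = truncExpNeg D n b * (v - w) := by
  set c : ℕ → 𝕜 := fun j => (-1 : 𝕜) ^ j / j.factorial
  have hterm (j : ℕ) : c (j + 1) • (D ^ (j + 1)) (b * v)
      = c (j + 1) • (D ^ (j + 1)) b * v - c j • ((D ^ j) b * w) := by
    rw [hD.pow_succ_apply_mul hv hw, smul_add, smul_mul_assoc, ← Nat.cast_smul_eq_nsmul 𝕜,
      smul_smul, Nat.cast_succ]
    simp only [c]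
    rw [neg_one_pow_div_factorial_succ_mul, neg_smul, sub_eq_add_neg]
  have hstable : ∑ j ∈ range (n + 2), c j • (D ^ j) b = ∑ j ∈ range (n + 1), c j • (D ^ j) b := by
    rw [sum_range_succ, hb, smul_zero, add_zero]
  calc truncExpNeg D (n + 1) (b * v)
      = ∑ j ∈ range (n + 1), c (j + 1) • (D ^ (j + 1)) b * v
          - ∑ j ∈ range (n + 1), c j • ((D ^ j) b * w) + c 0 • (b * v) := by
        rw [truncExpNeg_apply, sum_range_succ', sum_congr rfl fun j _ => hterm j, sum_sub_distrib]
        simp [c]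
    _ = (∑ j ∈ range (n + 2), c j • (D ^ j) b) * v
          - (∑ j ∈ range (n + 1), c j • (D ^ j) b) * w := by
        simp only [sum_range_succ' _ (n + 1), add_mul, sum_mul, smul_mul_assoc, pow_zero,
          Module.End.one_apply]
        abel
    _ = truncExpNeg D n b * (v - w) := by
        rw [hstable, mul_sub, truncExpNeg_apply]

end TruncExpNeg

section ExteriorAlgebra
variable {𝕜 V W : Type*} [Field 𝕜] [AddCommGroup V] [Module 𝕜 V]
  [AddCommGroup W] [Module 𝕜 W] (ρ : W →ₗ[𝕜] V) {D : Module.End 𝕜 (ExteriorAlgebra 𝕜 (V × W))}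

def invMap : V × W →ₗ[𝕜] V × W :=
  (LinearMap.fst 𝕜 V W + ρ ∘ₗ LinearMap.snd 𝕜 V W).prod (-LinearMap.snd 𝕜 V W)

lemma invMap_inl (X : V) : invMap ρ (X, 0) = (X, 0) := by
  simp [invMap]

lemma invMap_inr (u : W) : invMap ρ (0, u) = (ρ u, 0) - (0, u) := by
  simp [invMap]

variable {ρ}

lemma apply_ι_inl_eq_zero
    (hDgen : ∀ (X : V) (u : W), D (ExteriorAlgebra.ι 𝕜 (X, u)) = ExteriorAlgebra.ι 𝕜 (ρ u, 0))
    (X : V) : D (ExteriorAlgebra.ι 𝕜 (X, 0)) = 0 := by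
  rw [hDgen, map_zero, Prod.mk_zero_zero, map_zero]

lemma apply_prod_ι_inl_eq_zero (hD : IsLeibniz D)
    (hDgen : ∀ (X : V) (u : W), D (ExteriorAlgebra.ι 𝕜 (X, u)) = ExteriorAlgebra.ι 𝕜 (ρ u, 0))
    {p : ℕ} (X : Fin p → V) :
    D (List.ofFn fun i => ExteriorAlgebra.ι 𝕜 ((X i, 0) : V × W)).prod = 0 :=
  hD.apply_list_prod_eq_zero <| by
    simp only [List.forall_mem_ofFn_iff]
    exact fun i => apply_ι_inl_eq_zero hDgen (X i)

variable (ρ) in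
lemma map_invMap_prod_ι_inl {p : ℕ} (X : Fin p → V) :
    ExteriorAlgebra.map (invMap ρ) (List.ofFn fun i => ExteriorAlgebra.ι 𝕜 ((X i, 0) : V × W)).prod
      = (List.ofFn fun i => ExteriorAlgebra.ι 𝕜 ((X i, 0) : V × W)).prod := by
  simp [map_list_prod, List.map_ofFn, Function.comp_def, invMap_inl]

lemma map_invMap_mul_ι_inr [CharZero 𝕜] (hD : IsLeibniz D)
    (hDgen : ∀ (X : V) (u : W), D (ExteriorAlgebra.ι 𝕜 (X, u)) = ExteriorAlgebra.ι 𝕜 (ρ u, 0))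
    {b : ExteriorAlgebra 𝕜 (V × W)} {n : ℕ} (hb : (D ^ (n + 1)) b = 0)
    (hinv : ExteriorAlgebra.map (invMap ρ) b = (-1 : 𝕜) ^ n • truncExpNeg D n b) (u : W) :
    (D ^ (n + 2)) (b * ExteriorAlgebra.ι 𝕜 (0, u)) = 0 ∧
      ExteriorAlgebra.map (invMap ρ) (b * ExteriorAlgebra.ι 𝕜 (0, u))
        = (-1 : 𝕜) ^ (n + 1) • truncExpNeg D (n + 1) (b * ExteriorAlgebra.ι 𝕜 (0, u)) := by
  have hv := hDgen 0 u
  have hw := apply_ι_inl_eq_zero hDgen (ρ u)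
  refine ⟨hD.pow_add_two_apply_mul_eq_zero hv hw hb, ?_⟩
  rw [hD.truncExpNeg_succ_mul hv hw hb, map_mul, hinv, ExteriorAlgebra.map_apply_ι, invMap_inr,
    map_sub, ← neg_sub, mul_neg, smul_mul_assoc, pow_succ, mul_neg_one, neg_smul]

lemma map_invMap_mul_prod_ι_inr [CharZero 𝕜] (hD : IsLeibniz D)
    (hDgen : ∀ (X : V) (u : W), D (ExteriorAlgebra.ι 𝕜 (X, u)) = ExteriorAlgebra.ι 𝕜 (ρ u, 0))
    {a : ExteriorAlgebra 𝕜 (V × W)} (ha : D a = 0) (hinv : ExteriorAlgebra.map (invMap ρ) a = a) :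
    ∀ {q : ℕ} (u : Fin q → W),
      (D ^ (q + 1)) (a * (List.ofFn fun j => ExteriorAlgebra.ι 𝕜 ((0, u j) : V × W)).prod) = 0 ∧
      ExteriorAlgebra.map (invMap ρ)
          (a * (List.ofFn fun j => ExteriorAlgebra.ι 𝕜 ((0, u j) : V × W)).prod)
        = (-1 : 𝕜) ^ q •
          truncExpNeg D q (a * (List.ofFn fun j => ExteriorAlgebra.ι 𝕜 ((0, u j) : V × W)).prod)
  | 0, _ => by simp [ha, hinv, truncExpNeg_zero_apply]
  | q + 1, u => by
    rw [List.ofFn_succ', List.prod_concat, ← mul_assoc]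
    have ih := map_invMap_mul_prod_ι_inr hD hDgen ha hinv (fun j => u j.castSucc)
    exact map_invMap_mul_ι_inr hD hDgen ih.1 ih.2 _

end ExteriorAlgebra

theorem inv_star_formula_general (V W : Type*) [AddCommGroup V] [Module ℝ V]
    [AddCommGroup W] [Module ℝ W]
    (ρ : W →ₗ[ℝ] V)
    (D : Module.End ℝ (ExteriorAlgebra ℝ (V × W)))
    (hDder : ∀ a b : ExteriorAlgebra ℝ (V × W), D (a * b) = D a * b + a * D b)
    (hDgen : ∀ (X : V) (u : W),
      D (ExteriorAlgebra.ι ℝ ((X, u) : V × W)) = ExteriorAlgebra.ι ℝ ((ρ u, (0 : W)) : V × W))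
    (p q : ℕ) :
    ∀ ω ∈ mixedPiece V W p q,
      ExteriorAlgebra.map
        (LinearMap.prod (LinearMap.fst ℝ V W + ρ ∘ₗ LinearMap.snd ℝ V W)
          (-(LinearMap.snd ℝ V W))) ω
        = (-1 : ℝ) ^ q •
            ∑ j ∈ Finset.range (q + 1), (((-1 : ℝ) ^ j / (j.factorial : ℝ)) • (D ^ j) ω) := by
  intro ω hω
  have h := LinearMap.eqOn_span' (f := (ExteriorAlgebra.map (invMap ρ)).toLinearMap)
    (g := (-1 : ℝ) ^ q • truncExpNeg D q) ?_ hω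
  · rwa [LinearMap.smul_apply, truncExpNeg_apply] at h
  rintro _ ⟨X, u, rfl⟩
  exact (map_invMap_mul_prod_ι_inr hDder hDgen (apply_prod_ι_inl_eq_zero hDder hDgen X)
    (map_invMap_prod_ι_inl ρ X) u).2

/-- for the algebra automorphism `inv*` of `Λ•(V ⊕ W)` extending
`(X,u) ↦ (X+ρ(u), −u)` and the derivation `D_ρ` with `D_ρ(X,u) = (ρ(u),0)`, one has
`inv*(ω) = (−1)^q Σ_{j=0}^{q} ((−1)^j/j!) D_ρ^j ω` for all `ω ∈ (Λ^p V)⊗(Λ^q W)`. -/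
theorem inv_star_formula (V W : Type*) [AddCommGroup V] [Module ℝ V]
    [AddCommGroup W] [Module ℝ W] [FiniteDimensional ℝ V] [FiniteDimensional ℝ W]
    (ρ : W →ₗ[ℝ] V)
    (D : Module.End ℝ (ExteriorAlgebra ℝ (V × W)))
    (hDder : ∀ a b : ExteriorAlgebra ℝ (V × W), D (a * b) = D a * b + a * D b)
    (hDgen : ∀ (X : V) (u : W),
      D (ExteriorAlgebra.ι ℝ ((X, u) : V × W)) = ExteriorAlgebra.ι ℝ ((ρ u, (0 : W)) : V × W))
    (p q : ℕ) :
    ∀ ω ∈ mixedPiece V W p q,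
      ExteriorAlgebra.map
        (LinearMap.prod (LinearMap.fst ℝ V W + ρ ∘ₗ LinearMap.snd ℝ V W)
          (-(LinearMap.snd ℝ V W))) ω
        = (-1 : ℝ) ^ q •
            ∑ j ∈ Finset.range (q + 1), (((-1 : ℝ) ^ j / (j.factorial : ℝ)) • (D ^ j) ω) :=
  inv_star_formula_general V W ρ D hDder hDgen p q
end

section
/- Let V, W be finite-dimensional vector spaces, ρ : W → V linear with dual ρ* : V* → W*, and let π ∈ V ⊗ Λ^{k−1}W ⊆ Λ^k(V ⊕ W) satisfy the ρ-compatibility condition ι_{ρ*ξ} ι_η π = −ι_{ρ*η} ι_ξ π for all ξ, η ∈ V*. Then for every τ ∈ Λ^k W of the form π = D_ρ τ (where D_ρ is the derivation with D_ρ(X,u)=(ρ(u),0)), the compatibility holds automatically: ι_{ρ*ξ} ι_ξ (D_ρ τ) = 0 for all ξ ∈ V*. That is, every tensor of the form D_ρ τ is ρ-compatible. -/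
open ExteriorAlgebra

/-!
Contracting `D_ρ τ` with `ξ` in a `V`-slot only sees the `V`-vectors `ρ u` that `D_ρ` has
created from the factors `u` of `τ`, so `ι_ξ (D_ρ τ) = ι_{ρ*ξ} τ`. The compatibility
condition thus reduces to the anticommutativity `ι_{ρ*ξ} ι_{ρ*η} = -ι_{ρ*η} ι_{ρ*ξ}` of
contractions, which holds on the whole exterior algebra.
-/

section Contraction

variable {R M : Type*} [CommRing R] [AddCommGroup M] [Module R M]
  {c : Module.Dual R M → Module.End R (ExteriorAlgebra R M)}

theorem contraction_anticomm (hcone : ∀ θ, c θ 1 = 0)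
    (hcmul : ∀ θ m x, c θ (ι R m * x) = θ m • x - ι R m * c θ x)
    (θ θ' : Module.Dual R M) (x : ExteriorAlgebra R M) :
    c θ (c θ' x) = -c θ' (c θ x) := by
  induction x using CliffordAlgebra.left_induction with
  | algebraMap r => simp [Algebra.algebraMap_eq_smul_one, hcone]
  | add x y hx hy => simp only [map_add, hx, hy, neg_add]
  | ι_mul x m hx =>
    rw [hcmul θ' m, hcmul θ m, map_sub, map_sub, map_smul, map_smul, hcmul θ m, hcmul θ' m, hx,
      mul_neg]
    module

theorem contraction_contraction_self (hcone : ∀ θ, c θ 1 = 0)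
    (hcmul : ∀ θ m x, c θ (ι R m * x) = θ m • x - ι R m * c θ x)
    (θ : Module.Dual R M) (x : ExteriorAlgebra R M) :
    c θ (c θ x) = 0 := by
  induction x using CliffordAlgebra.left_induction with
  | algebraMap r => simp [Algebra.algebraMap_eq_smul_one, hcone]
  | add x y hx hy => simp only [map_add, hx, hy, add_zero]
  | ι_mul x m hx =>
    rw [hcmul θ m, map_sub, map_smul, hcmul θ m, hx, mul_zero]
    module

theorem contraction_list_prod_eq_zero (hcone : ∀ θ, c θ 1 = 0)
    (hcmul : ∀ θ m x, c θ (ι R m * x) = θ m • x - ι R m * c θ x)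
    {θ : Module.Dual R M} {l : List M} (hl : ∀ m ∈ l, θ m = 0) :
    c θ (l.map (ι R)).prod = 0 := by
  induction l with
  | nil => simpa using hcone θ
  | cons m l ih =>
    simp only [List.forall_mem_cons] at hl
    simp [hcmul, hl.1, ih hl.2]

theorem contraction_derivation_list_prod (hcone : ∀ θ, c θ 1 = 0)
    (hcmul : ∀ θ m x, c θ (ι R m * x) = θ m • x - ι R m * c θ x)
    {D : Module.End R (ExteriorAlgebra R M)} (hDder : ∀ a b, D (a * b) = D a * b + a * D b)
    {δ : M →ₗ[R] M} (hDgen : ∀ m, D (ι R m) = ι R (δ m))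
    {θ : Module.Dual R M} {l : List M} (hl : ∀ m ∈ l, θ m = 0) :
    c θ (D (l.map (ι R)).prod) = c (θ ∘ₗ δ) (l.map (ι R)).prod := by
  induction l with
  | nil =>
    have hD1 : D 1 = 0 := by simpa using hDder 1 1
    simp [hD1, hcone]
  | cons m l ih =>
    simp only [List.forall_mem_cons] at hl
    simp only [List.map_cons, List.prod_cons]
    rw [hDder, hDgen, map_add, hcmul, hcmul, hcmul, ih hl.2,
      contraction_list_prod_eq_zero hcone hcmul hl.2, hl.1]
    simp [sub_eq_add_neg]

end Contraction

theorem mixedPiece_zero_le {V W : Type*} [AddCommGroup V] [Module ℝ V]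
    [AddCommGroup W] [Module ℝ W] {q : ℕ} {P : Submodule ℝ (ExteriorAlgebra ℝ (V × W))}
    (hP : ∀ l : List W, ((l.map (LinearMap.inr ℝ V W)).map (ι ℝ)).prod ∈ P) :
    mixedPiece V W 0 q ≤ P := by
  refine Submodule.span_le.mpr ?_
  rintro _ ⟨X, u, rfl⟩
  simpa [List.map_ofFn, Function.comp_def] using hP (List.ofFn u)

theorem exact_tensor_is_compatible_general (V W : Type*) [AddCommGroup V] [Module ℝ V]
    [AddCommGroup W] [Module ℝ W]
    (ρ : W →ₗ[ℝ] V)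
    (D : Module.End ℝ (ExteriorAlgebra ℝ (V × W)))
    (hDder : ∀ a b : ExteriorAlgebra ℝ (V × W), D (a * b) = D a * b + a * D b)
    (hDgen : ∀ (X : V) (u : W),
      D (ExteriorAlgebra.ι ℝ ((X, u) : V × W)) = ExteriorAlgebra.ι ℝ ((ρ u, (0 : W)) : V × W))
    (c : ((V × W) →ₗ[ℝ] ℝ) → Module.End ℝ (ExteriorAlgebra ℝ (V × W)))
    (hcone : ∀ θ, c θ 1 = 0)
    (hcmul : ∀ θ (m : V × W) (x : ExteriorAlgebra ℝ (V × W)),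
      c θ (ExteriorAlgebra.ι ℝ m * x) = θ m • x - ExteriorAlgebra.ι ℝ m * c θ x)
    (k : ℕ) (τ : ExteriorAlgebra ℝ (V × W)) (hτ : τ ∈ mixedPiece V W 0 k) :
    (∀ ξ : V →ₗ[ℝ] ℝ,
      c (ξ ∘ₗ ρ ∘ₗ LinearMap.snd ℝ V W) (c (ξ ∘ₗ LinearMap.fst ℝ V W) (D τ)) = 0) ∧
    (∀ ξ η : V →ₗ[ℝ] ℝ,
      c (ξ ∘ₗ ρ ∘ₗ LinearMap.snd ℝ V W) (c (η ∘ₗ LinearMap.fst ℝ V W) (D τ))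
        = - c (η ∘ₗ ρ ∘ₗ LinearMap.snd ℝ V W) (c (ξ ∘ₗ LinearMap.fst ℝ V W) (D τ))) := by
  have contract_D : ∀ ξ : V →ₗ[ℝ] ℝ,
      c (ξ ∘ₗ LinearMap.fst ℝ V W) (D τ) = c (ξ ∘ₗ ρ ∘ₗ LinearMap.snd ℝ V W) τ := by
    intro ξ
    refine mixedPiece_zero_le (P := LinearMap.eqLocus (c (ξ ∘ₗ LinearMap.fst ℝ V W) ∘ₗ D)
      (c (ξ ∘ₗ ρ ∘ₗ LinearMap.snd ℝ V W))) (fun l => ?_) hτ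
    refine contraction_derivation_list_prod (δ := LinearMap.inl ℝ V W ∘ₗ ρ ∘ₗ
      LinearMap.snd ℝ V W) hcone hcmul hDder (fun m => hDgen m.1 m.2) ?_
    simp
  refine ⟨fun ξ => ?_, fun ξ η => ?_⟩
  · rw [contract_D, contraction_contraction_self hcone hcmul]
  · rw [contract_D, contract_D, contraction_anticomm hcone hcmul]

/-- every tensor of the form `π = D_ρ τ`, `τ ∈ Λ^k W`, is
ρ-compatible: `ι_{ρ*ξ} ι_ξ (D_ρ τ) = 0`, and more generally
`ι_{ρ*ξ} ι_η (D_ρτ) = −ι_{ρ*η} ι_ξ (D_ρτ)`, for all `ξ, η ∈ V*`.  Here `D_ρ` is the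
derivation with `D_ρ(X,u) = (ρ(u),0)` and `c` is the interior product (contraction)
by covectors on `Λ•(V ⊕ W)`; `ι_ξ` contracts `V`-slots (covector `ξ∘pr₁`) and
`ι_{ρ*ξ}` contracts `W`-slots (covector `ξ∘ρ∘pr₂`). -/
theorem exact_tensor_is_compatible (V W : Type*) [AddCommGroup V] [Module ℝ V]
    [AddCommGroup W] [Module ℝ W] [FiniteDimensional ℝ V] [FiniteDimensional ℝ W]
    (ρ : W →ₗ[ℝ] V)
    (D : Module.End ℝ (ExteriorAlgebra ℝ (V × W)))
    (hDder : ∀ a b : ExteriorAlgebra ℝ (V × W), D (a * b) = D a * b + a * D b)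
    (hDgen : ∀ (X : V) (u : W),
      D (ExteriorAlgebra.ι ℝ ((X, u) : V × W)) = ExteriorAlgebra.ι ℝ ((ρ u, (0 : W)) : V × W))
    (c : ((V × W) →ₗ[ℝ] ℝ) → Module.End ℝ (ExteriorAlgebra ℝ (V × W)))
    (hcone : ∀ θ, c θ 1 = 0)
    (hcmul : ∀ θ (m : V × W) (x : ExteriorAlgebra ℝ (V × W)),
      c θ (ExteriorAlgebra.ι ℝ m * x) = θ m • x - ExteriorAlgebra.ι ℝ m * c θ x)
    (k : ℕ) (τ : ExteriorAlgebra ℝ (V × W)) (hτ : τ ∈ mixedPiece V W 0 k) :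
    (∀ ξ : V →ₗ[ℝ] ℝ,
      c (ξ ∘ₗ ρ ∘ₗ LinearMap.snd ℝ V W) (c (ξ ∘ₗ LinearMap.fst ℝ V W) (D τ)) = 0) ∧
    (∀ ξ η : V →ₗ[ℝ] ℝ,
      c (ξ ∘ₗ ρ ∘ₗ LinearMap.snd ℝ V W) (c (η ∘ₗ LinearMap.fst ℝ V W) (D τ))
        = - c (η ∘ₗ ρ ∘ₗ LinearMap.snd ℝ V W) (c (ξ ∘ₗ LinearMap.fst ℝ V W) (D τ))) :=
  exact_tensor_is_compatible_general V W ρ D hDder hDgen c hcone hcmul k τ hτ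
end

section
/- Let V, W be finite-dimensional vector spaces, ρ : W → V linear, and π ∈ V ⊗ Λ^{k−1} W a ρ-compatible k-tensor (ι_{ρ*ξ} ι_η π = −ι_{ρ*η} ι_ξ π for all ξ, η ∈ V*). Then for all ξ ∈ V* and 1 ≤ j ≤ k−1: ι_{ρ*ξ} D_ρ^{j−1} π = D_ρ^j (ι_ξ π) = (1/(j+1)) ι_ξ D_ρ^j π, where D_ρ is the derivation of Λ•(V ⊕ W) with D_ρ(X,u) = (ρ(u),0). -/
open ExteriorAlgebra

/-! The contractions `c θ` coincide with Mathlib's `CliffordAlgebra.contractLeft θ`, both being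
skew derivations that agree on generators, and `D` is the even derivation extending
`f = inl ∘ ρ ∘ snd`, so that `[ι_θ, D] = ι_{θ ∘ f}`. As `(ξ ∘ fst) ∘ f = ρ*ξ` and `ρ*ξ ∘ f = 0`,
the operator `ι_{ρ*ξ}` commutes with `D`, and `ι_ξ D^j = D^j ι_ξ + j D^{j-1} ι_{ρ*ξ}`. Both
identities thereby reduce to `ι_{ρ*ξ} π = D (ι_ξ π)`. The difference of its two sides lies in
`V ⊗ ΛW`, and ρ-compatibility makes all its contractions with covectors on `V` vanish, which
forces it to be zero. -/

theorem mul_pow_succ_of_mul_eq_mul_add {A : Type*} [Semiring A] {a b d : A}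
    (h : a * d = d * a + b) (hb : Commute b d) (n : ℕ) :
    a * d ^ (n + 1) = d ^ (n + 1) * a + (n + 1) • (d ^ n * b) := by
  induction n with
  | zero => simpa using h
  | succ n ih =>
    calc a * d ^ (n + 2) = a * d ^ (n + 1) * d := by rw [pow_succ _ (n + 1), mul_assoc]
      _ = d ^ (n + 1) * (d * a + b) + (n + 1) • (d ^ n * (d * b)) := by
        rw [ih, add_mul, smul_mul_assoc, mul_assoc, h, mul_assoc, hb.eq]
      _ = d ^ (n + 2) * a + (n + 2) • (d ^ (n + 1) * b) := by
        rw [mul_add, ← mul_assoc, ← mul_assoc, ← pow_succ, ← pow_succ, add_assoc, ← succ_nsmul']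

theorem map_one_eq_zero_of_leibniz {A : Type*} [Ring A] {D : A → A}
    (hD : ∀ a b, D (a * b) = D a * b + a * D b) : D 1 = 0 := by
  simpa using hD 1 1

namespace ExteriorAlgebra

open CliffordAlgebra
  (contractLeft contractLeft_ι_mul contractLeft_one contractLeft_comm contractLeft_algebraMap)

variable {R M : Type*} [CommRing R] [AddCommGroup M] [Module R M]

theorem eq_contractLeft_of_ι_mul (c : Module.Dual R M → Module.End R (ExteriorAlgebra R M))
    (hc_one : ∀ θ, c θ 1 = 0)
    (hc_ι_mul : ∀ θ m x, c θ (ι R m * x) = θ m • x - ι R m * c θ x) (θ : Module.Dual R M) :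
    c θ = contractLeft θ := by
  refine LinearMap.ext fun x => ?_
  induction x using CliffordAlgebra.left_induction with
  | algebraMap r => rw [Algebra.algebraMap_eq_smul_one, map_smul, map_smul, hc_one,
      contractLeft_one]
  | add x y hx hy => rw [map_add, map_add, hx, hy]
  | ι_mul x m hx => rw [hc_ι_mul, hx]; exact (contractLeft_ι_mul _ _ _).symm

theorem contractLeft_map_apply {N : Type*} [AddCommGroup N] [Module R N] (g : N →ₗ[R] M)
    (θ : Module.Dual R M) (x : ExteriorAlgebra R N) :
    contractLeft θ (map g x) = map g (contractLeft (θ ∘ₗ g) x) := by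
  induction x using CliffordAlgebra.left_induction with
  | algebraMap r => simp [contractLeft_algebraMap]
  | add x y hx hy => rw [map_add, map_add, map_add, hx, hy, map_add]
  | ι_mul x m hx =>
    rw [map_mul, map_apply_ι, contractLeft_ι_mul, hx,
      contractLeft_ι_mul, map_sub, map_smul, map_mul, map_apply_ι]
    rfl

section Derivation

variable (f : M →ₗ[R] M) {D : Module.End R (ExteriorAlgebra R M)}
  (hD_mul : ∀ a b, D (a * b) = D a * b + a * D b) (hD_ι : ∀ m, D (ι R m) = ι R (f m))
include hD_mul hD_ι

theorem contractLeft_mul_eq_mul_contractLeft_add (θ : Module.Dual R M) :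
    contractLeft θ * D = D * contractLeft θ + contractLeft (θ ∘ₗ f) := by
  refine LinearMap.ext fun x => ?_
  simp only [Module.End.mul_apply, LinearMap.add_apply]
  induction x using CliffordAlgebra.left_induction with
  | algebraMap r =>
    simp only [Algebra.algebraMap_eq_smul_one, map_smul, map_one_eq_zero_of_leibniz hD_mul,
      contractLeft_one, smul_zero, map_zero, add_zero]
  | add x y hx hy => simp only [map_add, hx, hy]; abel
  | ι_mul x m hx =>
    rw [hD_mul, hD_ι, map_add, contractLeft_ι_mul, contractLeft_ι_mul, hx,
      contractLeft_ι_mul, contractLeft_ι_mul, map_sub, map_smul, hD_mul, hD_ι]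
    simp only [LinearMap.comp_apply, mul_add]
    abel

theorem commute_contractLeft_of_comp_eq_zero {θ : Module.Dual R M} (hθ : θ ∘ₗ f = 0) :
    Commute (contractLeft θ) D := by
  have h := contractLeft_mul_eq_mul_contractLeft_add f hD_mul hD_ι θ
  rwa [hθ, map_zero, add_zero] at h

theorem contractLeft_mul_pow_succ {θ : Module.Dual R M} (hθ : (θ ∘ₗ f) ∘ₗ f = 0)
    (n : ℕ) :
    contractLeft θ * D ^ (n + 1) = D ^ (n + 1) * contractLeft θ
      + (n + 1) • (D ^ n * contractLeft (θ ∘ₗ f)) :=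
  mul_pow_succ_of_mul_eq_mul_add (contractLeft_mul_eq_mul_contractLeft_add f hD_mul hD_ι θ)
    (commute_contractLeft_of_comp_eq_zero f hD_mul hD_ι hθ) n

end Derivation

section Product

variable {R V W : Type*} [CommRing R] [AddCommGroup V] [Module R V] [AddCommGroup W] [Module R W]

variable (R V W) in
def wedgeSnd : Subalgebra R (ExteriorAlgebra R (V × W)) :=
  (map (LinearMap.inr R V W)).range

variable (R V W) in
/-- The copy of `V ⊗ ΛW` inside `Λ(V ⊕ W)`. -/
def fstMulWedgeSnd : Submodule R (ExteriorAlgebra R (V × W)) :=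
  LinearMap.range (ι R ∘ₗ LinearMap.inl R V W) * Subalgebra.toSubmodule (wedgeSnd R V W)

variable (R V W) in
def anchorMap (ρ : W →ₗ[R] V) : V × W →ₗ[R] V × W :=
  LinearMap.inl R V W ∘ₗ ρ ∘ₗ LinearMap.snd R V W

theorem comp_anchorMap_fst (ρ : W →ₗ[R] V) (ξ : Module.Dual R V) :
    (ξ ∘ₗ LinearMap.fst R V W) ∘ₗ anchorMap R V W ρ
      = ξ ∘ₗ ρ ∘ₗ LinearMap.snd R V W := by
  ext <;> simp [anchorMap]

theorem comp_anchorMap_snd (ρ : W →ₗ[R] V) (ξ : Module.Dual R V) :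
    (ξ ∘ₗ ρ ∘ₗ LinearMap.snd R V W) ∘ₗ anchorMap R V W ρ = 0 := by
  ext <;> simp [anchorMap]

theorem contractLeft_eq_zero_of_mem_wedgeSnd {θ : Module.Dual R (V × W)}
    (hθ : θ ∘ₗ LinearMap.inr R V W = 0) {w : ExteriorAlgebra R (V × W)}
    (hw : w ∈ wedgeSnd R V W) : contractLeft θ w = 0 := by
  obtain ⟨w, rfl⟩ := (AlgHom.mem_range _).1 hw
  rw [contractLeft_map_apply, hθ, map_zero, LinearMap.zero_apply, map_zero]

theorem contractLeft_mem_wedgeSnd (θ : Module.Dual R (V × W)) {w : ExteriorAlgebra R (V × W)}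
    (hw : w ∈ wedgeSnd R V W) : contractLeft θ w ∈ wedgeSnd R V W := by
  obtain ⟨w, rfl⟩ := (AlgHom.mem_range _).1 hw
  rw [contractLeft_map_apply]
  exact AlgHom.mem_range_self _ _

theorem ι_inl_mul_mem_fstMulWedgeSnd (X : V) {w : ExteriorAlgebra R (V × W)}
    (hw : w ∈ wedgeSnd R V W) : ι R (X, (0 : W)) * w ∈ fstMulWedgeSnd R V W :=
  Submodule.mul_mem_mul ⟨X, rfl⟩ hw

@[elab_as_elim]
theorem fstMulWedgeSnd_induction {P : ∀ z, z ∈ fstMulWedgeSnd R V W → Prop}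
    (ι_mul : ∀ (X : V) w (hw : w ∈ wedgeSnd R V W),
      P (ι R (X, (0 : W)) * w) (ι_inl_mul_mem_fstMulWedgeSnd X hw))
    (add : ∀ x hx y hy, P x hx → P y hy → P (x + y) (add_mem hx hy))
    {z : ExteriorAlgebra R (V × W)} (hz : z ∈ fstMulWedgeSnd R V W) : P z hz := by
  induction hz using Submodule.mul_induction_on' with
  | mem_mul_mem _ hm w hw => obtain ⟨X, rfl⟩ := hm; exact ι_mul X w hw
  | add x hx y hy ihx ihy => exact add x hx y hy ihx ihy

theorem ι_inr_mul_mem_fstMulWedgeSnd (u : W) {z : ExteriorAlgebra R (V × W)}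
    (hz : z ∈ fstMulWedgeSnd R V W) : ι R ((0 : V), u) * z ∈ fstMulWedgeSnd R V W := by
  induction hz using fstMulWedgeSnd_induction with
  | ι_mul X w hw =>
    have hu : ι R ((0 : V), u) ∈ wedgeSnd R V W := ⟨ι R u, map_apply_ι _ _⟩
    rw [← mul_assoc, eq_neg_of_add_eq_zero_left (ι_add_mul_swap _ _), neg_mul, mul_assoc]
    exact neg_mem (ι_inl_mul_mem_fstMulWedgeSnd X (mul_mem hu hw))
  | add x _ y _ hx hy => rw [mul_add]; exact add_mem hx hy

theorem contractLeft_fst_mem_wedgeSnd (ξ : Module.Dual R V) {z : ExteriorAlgebra R (V × W)}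
    (hz : z ∈ fstMulWedgeSnd R V W) :
    contractLeft (ξ ∘ₗ LinearMap.fst R V W) z ∈ wedgeSnd R V W := by
  induction hz using fstMulWedgeSnd_induction with
  | ι_mul X w hw =>
    rw [contractLeft_ι_mul, contractLeft_eq_zero_of_mem_wedgeSnd (by ext; simp) hw,
      mul_zero, sub_zero]
    exact Subalgebra.smul_mem _ hw _
  | add x _ y _ hx hy => rw [map_add]; exact add_mem hx hy

theorem contractLeft_mem_fstMulWedgeSnd {θ : Module.Dual R (V × W)}
    (hθ : θ ∘ₗ LinearMap.inl R V W = 0) {z : ExteriorAlgebra R (V × W)}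
    (hz : z ∈ fstMulWedgeSnd R V W) : contractLeft θ z ∈ fstMulWedgeSnd R V W := by
  induction hz using fstMulWedgeSnd_induction with
  | ι_mul X w hw =>
    rw [contractLeft_ι_mul, show θ (X, 0) = 0 from LinearMap.congr_fun hθ X,
      zero_smul, zero_sub]
    exact neg_mem (ι_inl_mul_mem_fstMulWedgeSnd X (contractLeft_mem_wedgeSnd θ hw))
  | add x _ y _ hx hy => rw [map_add]; exact add_mem hx hy

theorem sum_ι_mul_contractLeft_of_mem_fstMulWedgeSnd {I : Type*} [Fintype I]
    (b : Module.Basis I R V) {z : ExteriorAlgebra R (V × W)} (hz : z ∈ fstMulWedgeSnd R V W) :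
    ∑ a, ι R (b a, (0 : W)) * contractLeft (b.coord a ∘ₗ LinearMap.fst R V W) z
      = z := by
  induction hz using fstMulWedgeSnd_induction with
  | ι_mul X w hw =>
    have hθ : ∀ a, (b.coord a ∘ₗ LinearMap.fst R V W) ∘ₗ LinearMap.inr R V W = 0 := by
      intro a; ext; simp
    simp only [contractLeft_ι_mul, contractLeft_eq_zero_of_mem_wedgeSnd (hθ _) hw,
      mul_zero, sub_zero, mul_smul_comm, ← smul_mul_assoc, ← Finset.sum_mul]
    congr 1
    change _ = (ι R ∘ₗ LinearMap.inl R V W) X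
    conv_rhs => rw [← b.sum_repr X, map_sum]
    simp only [map_smul, LinearMap.comp_apply, LinearMap.inl_apply, LinearMap.fst_apply,
      Module.Basis.coord_apply]
  | add x _ y _ hx hy => simp only [map_add, mul_add, Finset.sum_add_distrib, hx, hy]

theorem eq_zero_of_mem_fstMulWedgeSnd [Module.Free R V] [Module.Finite R V]
    {z : ExteriorAlgebra R (V × W)} (hz : z ∈ fstMulWedgeSnd R V W)
    (h : ∀ ξ : Module.Dual R V, contractLeft (ξ ∘ₗ LinearMap.fst R V W) z = 0) :
    z = 0 := by
  rw [← sum_ι_mul_contractLeft_of_mem_fstMulWedgeSnd (Module.Free.chooseBasis R V) hz]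
  simp [h]

section Anchor

variable (ρ : W →ₗ[R] V) {D : Module.End R (ExteriorAlgebra R (V × W))}
  (hD_mul : ∀ a b, D (a * b) = D a * b + a * D b)
  (hD_ι : ∀ m, D (ι R m) = ι R (anchorMap R V W ρ m))
include hD_mul hD_ι

theorem contractLeft_snd_derivation_pow_apply (ξ : Module.Dual R V) (n : ℕ)
    (x : ExteriorAlgebra R (V × W)) :
    contractLeft (ξ ∘ₗ ρ ∘ₗ LinearMap.snd R V W) ((D ^ n) x)
      = (D ^ n) (contractLeft (ξ ∘ₗ ρ ∘ₗ LinearMap.snd R V W) x) :=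
  LinearMap.congr_fun ((commute_contractLeft_of_comp_eq_zero _ hD_mul hD_ι
    (comp_anchorMap_snd ρ ξ)).pow_right n).eq x

theorem contractLeft_fst_derivation_pow_succ_apply (ξ : Module.Dual R V) (n : ℕ)
    (x : ExteriorAlgebra R (V × W)) :
    contractLeft (ξ ∘ₗ LinearMap.fst R V W) ((D ^ (n + 1)) x)
      = (D ^ (n + 1)) (contractLeft (ξ ∘ₗ LinearMap.fst R V W) x)
        + (n + 1) • (D ^ n) (contractLeft (ξ ∘ₗ ρ ∘ₗ LinearMap.snd R V W) x) := by
  have h := contractLeft_mul_pow_succ _ hD_mul hD_ι (θ := ξ ∘ₗ LinearMap.fst R V W)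
    (by rw [comp_anchorMap_fst, comp_anchorMap_snd]) n
  rw [comp_anchorMap_fst] at h
  exact LinearMap.congr_fun h x

theorem derivation_mem_fstMulWedgeSnd {w : ExteriorAlgebra R (V × W)} (hw : w ∈ wedgeSnd R V W) :
    D w ∈ fstMulWedgeSnd R V W := by
  obtain ⟨w, rfl⟩ := (AlgHom.mem_range _).1 hw
  clear hw
  induction w using CliffordAlgebra.left_induction with
  | algebraMap r =>
    rw [AlgHom.commutes, Algebra.algebraMap_eq_smul_one, map_smul,
      map_one_eq_zero_of_leibniz hD_mul, smul_zero]
    exact zero_mem _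
  | add x y hx hy => rw [map_add, map_add]; exact add_mem hx hy
  | ι_mul x u hx =>
    rw [map_mul, map_apply_ι, hD_mul, hD_ι]
    exact add_mem (ι_inl_mul_mem_fstMulWedgeSnd (ρ u) (AlgHom.mem_range_self _ _))
      (ι_inr_mul_mem_fstMulWedgeSnd u hx)

theorem contractLeft_snd_eq_derivation_contractLeft_fst [Module.Free R V] [Module.Finite R V]
    {π : ExteriorAlgebra R (V × W)} (hπ : π ∈ fstMulWedgeSnd R V W)
    (hcompat : ∀ ξ η : Module.Dual R V,
      contractLeft (ξ ∘ₗ ρ ∘ₗ LinearMap.snd R V W)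
          (contractLeft (η ∘ₗ LinearMap.fst R V W) π)
        = -contractLeft (η ∘ₗ ρ ∘ₗ LinearMap.snd R V W)
          (contractLeft (ξ ∘ₗ LinearMap.fst R V W) π))
    (ξ : Module.Dual R V) :
    contractLeft (ξ ∘ₗ ρ ∘ₗ LinearMap.snd R V W) π
      = D (contractLeft (ξ ∘ₗ LinearMap.fst R V W) π) := by
  have hξπ := contractLeft_fst_mem_wedgeSnd ξ hπ
  refine sub_eq_zero.1 (eq_zero_of_mem_fstMulWedgeSnd (sub_mem
    (contractLeft_mem_fstMulWedgeSnd (by ext; simp) hπ)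
    (derivation_mem_fstMulWedgeSnd ρ hD_mul hD_ι hξπ)) fun η => ?_)
  have hD := LinearMap.congr_fun (contractLeft_mul_eq_mul_contractLeft_add _ hD_mul hD_ι
    (η ∘ₗ LinearMap.fst R V W)) (contractLeft (ξ ∘ₗ LinearMap.fst R V W) π)
  rw [Module.End.mul_apply, LinearMap.add_apply, Module.End.mul_apply,
    contractLeft_eq_zero_of_mem_wedgeSnd (by ext; simp) hξπ, map_zero, zero_add,
    comp_anchorMap_fst] at hD
  rw [map_sub, contractLeft_comm, hcompat, neg_neg, hD, sub_self]

end Anchor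

end Product

end ExteriorAlgebra

theorem mixedPiece_one_le_fstMulWedgeSnd {V W : Type*} [AddCommGroup V] [Module ℝ V]
    [AddCommGroup W] [Module ℝ W] (q : ℕ) : mixedPiece V W 1 q ≤ fstMulWedgeSnd ℝ V W := by
  rw [mixedPiece, Submodule.span_le]
  rintro _ ⟨X, u, rfl⟩
  rw [List.ofFn_succ, List.ofFn_zero, List.prod_singleton]
  refine ι_inl_mul_mem_fstMulWedgeSnd (X 0) (Subalgebra.list_prod_mem _ ?_)
  simp only [List.mem_ofFn, forall_exists_index]
  rintro _ j rfl
  exact ⟨ι ℝ (u j), map_apply_ι _ _⟩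

theorem contraction_Drho_identities_general (V W : Type*) [AddCommGroup V] [Module ℝ V]
    [AddCommGroup W] [Module ℝ W] [FiniteDimensional ℝ V]
    (ρ : W →ₗ[ℝ] V)
    (D : Module.End ℝ (ExteriorAlgebra ℝ (V × W)))
    (hDder : ∀ a b : ExteriorAlgebra ℝ (V × W), D (a * b) = D a * b + a * D b)
    (hDgen : ∀ (X : V) (u : W),
      D (ExteriorAlgebra.ι ℝ ((X, u) : V × W)) = ExteriorAlgebra.ι ℝ ((ρ u, (0 : W)) : V × W))
    (c : ((V × W) →ₗ[ℝ] ℝ) → Module.End ℝ (ExteriorAlgebra ℝ (V × W)))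
    (hcone : ∀ θ, c θ 1 = 0)
    (hcmul : ∀ θ (m : V × W) (x : ExteriorAlgebra ℝ (V × W)),
      c θ (ExteriorAlgebra.ι ℝ m * x) = θ m • x - ExteriorAlgebra.ι ℝ m * c θ x)
    (k : ℕ) (π : ExteriorAlgebra ℝ (V × W)) (hπ : π ∈ mixedPiece V W 1 (k - 1))
    (hcompat : ∀ ξ η : V →ₗ[ℝ] ℝ,
      c (ξ ∘ₗ ρ ∘ₗ LinearMap.snd ℝ V W) (c (η ∘ₗ LinearMap.fst ℝ V W) π)
        = - c (η ∘ₗ ρ ∘ₗ LinearMap.snd ℝ V W) (c (ξ ∘ₗ LinearMap.fst ℝ V W) π)) :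
    ∀ ξ : V →ₗ[ℝ] ℝ, ∀ j : ℕ, 1 ≤ j → j ≤ k - 1 →
      c (ξ ∘ₗ ρ ∘ₗ LinearMap.snd ℝ V W) ((D ^ (j - 1)) π)
        = (D ^ j) (c (ξ ∘ₗ LinearMap.fst ℝ V W) π) ∧
      ((j + 1 : ℝ))⁻¹ • c (ξ ∘ₗ LinearMap.fst ℝ V W) ((D ^ j) π)
        = (D ^ j) (c (ξ ∘ₗ LinearMap.fst ℝ V W) π) := by
  intro ξ j hj _
  obtain ⟨n, rfl⟩ := Nat.exists_eq_add_of_le' hj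
  simp only [eq_contractLeft_of_ι_mul c hcone hcmul] at hcompat ⊢
  have hD_ι : ∀ m, D (ι ℝ m) = ι ℝ (anchorMap ℝ V W ρ m) := fun m => hDgen m.1 m.2
  have hkey := contractLeft_snd_eq_derivation_contractLeft_fst ρ hDder hD_ι
    (mixedPiece_one_le_fstMulWedgeSnd (k - 1) hπ) hcompat ξ
  constructor
  · rw [Nat.add_sub_cancel, contractLeft_snd_derivation_pow_apply ρ hDder hD_ι, hkey,
      ← Module.End.mul_apply, ← pow_succ]
  · rw [contractLeft_fst_derivation_pow_succ_apply ρ hDder hD_ι, hkey,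
      ← Module.End.mul_apply (D ^ n), ← pow_succ, ← succ_nsmul', ← Nat.cast_smul_eq_nsmul ℝ,
      smul_smul, Nat.cast_add_one (n + 1), inv_mul_cancel₀ (by positivity), one_smul]

/-- for a ρ-compatible k-tensor `π ∈ V ⊗ Λ^{k−1}W` and `1 ≤ j ≤ k−1`:
`ι_{ρ*ξ} D_ρ^{j−1} π = D_ρ^j (ι_ξ π) = (1/(j+1)) ι_ξ D_ρ^j π`. -/
theorem contraction_Drho_identities (V W : Type*) [AddCommGroup V] [Module ℝ V]
    [AddCommGroup W] [Module ℝ W] [FiniteDimensional ℝ V] [FiniteDimensional ℝ W]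
    (ρ : W →ₗ[ℝ] V)
    (D : Module.End ℝ (ExteriorAlgebra ℝ (V × W)))
    (hDder : ∀ a b : ExteriorAlgebra ℝ (V × W), D (a * b) = D a * b + a * D b)
    (hDgen : ∀ (X : V) (u : W),
      D (ExteriorAlgebra.ι ℝ ((X, u) : V × W)) = ExteriorAlgebra.ι ℝ ((ρ u, (0 : W)) : V × W))
    (c : ((V × W) →ₗ[ℝ] ℝ) → Module.End ℝ (ExteriorAlgebra ℝ (V × W)))
    (hcone : ∀ θ, c θ 1 = 0)
    (hcmul : ∀ θ (m : V × W) (x : ExteriorAlgebra ℝ (V × W)),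
      c θ (ExteriorAlgebra.ι ℝ m * x) = θ m • x - ExteriorAlgebra.ι ℝ m * c θ x)
    (k : ℕ) (π : ExteriorAlgebra ℝ (V × W)) (hπ : π ∈ mixedPiece V W 1 (k - 1))
    (hcompat : ∀ ξ η : V →ₗ[ℝ] ℝ,
      c (ξ ∘ₗ ρ ∘ₗ LinearMap.snd ℝ V W) (c (η ∘ₗ LinearMap.fst ℝ V W) π)
        = - c (η ∘ₗ ρ ∘ₗ LinearMap.snd ℝ V W) (c (ξ ∘ₗ LinearMap.fst ℝ V W) π)) :
    ∀ ξ : V →ₗ[ℝ] ℝ, ∀ j : ℕ, 1 ≤ j → j ≤ k - 1 →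
      c (ξ ∘ₗ ρ ∘ₗ LinearMap.snd ℝ V W) ((D ^ (j - 1)) π)
        = (D ^ j) (c (ξ ∘ₗ LinearMap.fst ℝ V W) π) ∧
      ((j + 1 : ℝ))⁻¹ • c (ξ ∘ₗ LinearMap.fst ℝ V W) ((D ^ j) π)
        = (D ^ j) (c (ξ ∘ₗ LinearMap.fst ℝ V W) π) :=
  contraction_Drho_identities_general V W ρ D hDder hDgen c hcone hcmul k π hπ hcompat
end

section
/- Let V, W be finite-dimensional vector spaces, ρ : W → V a surjective linear map, and λ : V → W a splitting (ρ∘λ = id_V). Let Υ : Λ•(V ⊕ W) → Λ•W be the algebra map sending X₁∧⋯∧X_p∧Z ↦ λ(X₁)∧⋯∧λ(X_p)∧Z for X_i ∈ V, Z ∈ Λ^q W. Then for all ξ ∈ V* and all ω ∈ Λ•(V ⊕ W): ι_{ρ*ξ} Υ(ω) = Υ(ι_ξ ω + ι_{ρ*ξ} ω). -/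
open ExteriorAlgebra

/-- for a surjective `ρ : W → V` with splitting `λ` (`ρ∘λ = id`), the
algebra map `Υ : Λ•(V ⊕ W) → Λ•W` induced by `(X,u) ↦ λ(X) + u` satisfies
`ι_{ρ*ξ} Υ(ω) = Υ(ι_ξ ω + ι_{ρ*ξ} ω)` for all `ξ ∈ V*` and `ω ∈ Λ•(V ⊕ W)`.
Here `c` (resp. `cW`) is the interior product on `Λ•(V × W)` (resp. `Λ•W`). -/
theorem upsilon_contraction (V W : Type*) [AddCommGroup V] [Module ℝ V]
    [AddCommGroup W] [Module ℝ W] [FiniteDimensional ℝ V] [FiniteDimensional ℝ W]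
    (ρ : W →ₗ[ℝ] V) (hsurj : Function.Surjective ρ)
    (lam : V →ₗ[ℝ] W) (hsplit : ρ ∘ₗ lam = LinearMap.id)
    (c : ((V × W) →ₗ[ℝ] ℝ) → Module.End ℝ (ExteriorAlgebra ℝ (V × W)))
    (hcone : ∀ θ, c θ 1 = 0)
    (hcmul : ∀ θ (m : V × W) (x : ExteriorAlgebra ℝ (V × W)),
      c θ (ExteriorAlgebra.ι ℝ m * x) = θ m • x - ExteriorAlgebra.ι ℝ m * c θ x)
    (cW : (W →ₗ[ℝ] ℝ) → Module.End ℝ (ExteriorAlgebra ℝ W))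
    (hcWone : ∀ ζ, cW ζ 1 = 0)
    (hcWmul : ∀ ζ (w : W) (x : ExteriorAlgebra ℝ W),
      cW ζ (ExteriorAlgebra.ι ℝ w * x) = ζ w • x - ExteriorAlgebra.ι ℝ w * cW ζ x) :
    ∀ (ξ : V →ₗ[ℝ] ℝ) (ω : ExteriorAlgebra ℝ (V × W)),
      cW (ξ ∘ₗ ρ)
        (ExteriorAlgebra.map (lam ∘ₗ LinearMap.fst ℝ V W + LinearMap.snd ℝ V W) ω)
        = ExteriorAlgebra.map (lam ∘ₗ LinearMap.fst ℝ V W + LinearMap.snd ℝ V W)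
            (c (ξ ∘ₗ LinearMap.fst ℝ V W) ω + c (ξ ∘ₗ ρ ∘ₗ LinearMap.snd ℝ V W) ω) := by
  intro ξ ω
  set φ := lam ∘ₗ LinearMap.fst ℝ V W + LinearMap.snd ℝ V W with hφ
  set θ₁ := ξ ∘ₗ LinearMap.fst ℝ V W with hθ₁
  set θ₂ := ξ ∘ₗ ρ ∘ₗ LinearMap.snd ℝ V W with hθ₂
  set ζ := ξ ∘ₗ ρ with hζ
  have hcalg : ∀ θ (r : ℝ), c θ (algebraMap ℝ _ r) = 0 := by
    intro θ r
    rw [Algebra.algebraMap_eq_smul_one, map_smul, hcone, smul_zero]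
  have hretr : ∀ v : V, ρ (lam v) = v := fun v => congrArg (· v) (congrArg DFunLike.coe hsplit)
  induction ω using CliffordAlgebra.left_induction with
  | algebraMap r =>
    rw [hcalg, hcalg, add_zero, map_zero]
    rw [AlgHom.commutes, Algebra.algebraMap_eq_smul_one, map_smul, hcWone, smul_zero]
  | add x y hx hy =>
    simp only [map_add] at *
    rw [hx, hy]; abel
  | ι_mul x m hx =>
    obtain ⟨v, w⟩ := m
    have hφm : φ (v, w) = lam v + w := by simp [hφ]
    rw [map_mul, ExteriorAlgebra.map_apply_ι, hφm, hcWmul, hcmul, hcmul]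
    have h1 : θ₁ (v, w) = ξ v := by simp [hθ₁]
    have h2 : θ₂ (v, w) = ξ (ρ w) := by simp [hθ₂]
    have h3 : ζ (lam v + w) = ξ v + ξ (ρ w) := by simp [hζ, hretr]
    rw [h1, h2, h3, hx]
    simp only [map_sub, map_add, map_smul, map_mul, ExteriorAlgebra.map_apply_ι, hφm,
      add_smul, mul_add, add_mul]
    abel
end

section
/- Let W be a finite-dimensional vector space of dimension n ≥ 1, V a vector space, and ρ : W → V a nonzero linear map with dual ρ* : V* → W*. Suppose π ∈ V ⊗ Λ^n W satisfies ι_{ρ*ξ}(ι_η π) = −ι_{ρ*η}(ι_ξ π) for all ξ, η ∈ V*, where ι_η contracts the V-factor and ι_{ρ*ξ} contracts the Λ^n W-factor. Then π = 0. -/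
/-! Write `π = ι(x, 0) * Ω`, where `Ω` is the top wedge of a basis `w₀, e₁, …, eₘ` of `W` with
`ξ₀ (ρ w₀) = 1` and `ξ₀ (ρ eⱼ) = 0`, so that `ι_{ρ*ξ₀} Ω = Ω' := e₁ ∧ ⋯ ∧ eₘ`. As `ι_η π = η x • Ω`,
compatibility for `(ξ₀, η)` reads `η x • Ω' = -(ξ₀ x • ι_{ρ*η} Ω)`. Taking `η = ξ₀` gives
`ξ₀ x • Ω' = 0`, so either `Ω' = 0`, or `ξ₀ x = 0` and then `η x • Ω' = 0` for every `η`.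
Either way `x = 0` or `Ω' = 0`, and `π = ι(x, 0) * ι(0, w₀) * Ω'` vanishes. -/

open ExteriorAlgebra

theorem AlternatingMap.apply_eq_basis_det_smul {R M N : Type*} [CommRing R]
    [AddCommGroup M] [Module R M] [AddCommGroup N] [Module R N] {n : ℕ}
    (e : Module.Basis (Fin n) R M) (g : M [⋀^Fin n]→ₗ[R] N) (u : Fin n → M) :
    g u = e.det u • g e := by
  have hg : g = (LinearMap.id.smulRight (g e)).compAlternatingMap e.det := by
    refine e.ext_alternating fun v hv => ?_
    let σ : Equiv.Perm (Fin n) := Equiv.ofBijective v (Finite.injective_iff_bijective.1 hv)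
    change g (e ∘ σ) = (LinearMap.id.smulRight (g e)).compAlternatingMap e.det (e ∘ σ)
    simp [AlternatingMap.map_perm, Module.Basis.det_self]
  conv_lhs => rw [hg]
  simp

theorem LinearMap.exists_dual_apply_eq_one_of_ne_zero {K V W : Type*} [Field K] [AddCommGroup V]
    [Module K V] [AddCommGroup W] [Module K W] {ρ : W →ₗ[K] V} (hρ : ρ ≠ 0) :
    ∃ (ξ : Module.Dual K V) (w : W), ξ (ρ w) = 1 := by
  obtain ⟨w, hw⟩ : ∃ w, ρ w ≠ 0 := by
    by_contra! h
    exact hρ (LinearMap.ext h)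
  obtain ⟨ξ, hξ⟩ := Module.Projective.exists_dual_eq_one K hw
  exact ⟨ξ, w, hξ⟩

theorem eq_zero_or_eq_zero_of_forall_dual_smul {K V M : Type*} [Field K] [AddCommGroup V]
    [Module K V] [AddCommGroup M] [Module K M] {x : V} {y : M}
    (h : ∀ η : Module.Dual K V, η x • y = 0) : x = 0 ∨ y = 0 := by
  refine or_iff_not_imp_left.2 fun hx => ?_
  obtain ⟨η, hη⟩ := Module.Projective.exists_dual_eq_one K hx
  simpa [hη] using h η

theorem Module.Basis.exists_fin_succ_apply_zero_eq_of_apply_eq_one {K W : Type*} [Field K]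
    [AddCommGroup W] [Module K W] [FiniteDimensional K W] {m : ℕ}
    (hm : Module.finrank K W = m + 1) {φ : Module.Dual K W} {w₀ : W} (hw₀ : φ w₀ = 1) :
    ∃ e : Module.Basis (Fin (m + 1)) K W, e 0 = w₀ ∧ ∀ j : Fin m, φ (e j.succ) = 0 := by
  have hker : Module.finrank K (LinearMap.ker φ) = m := by
    have hφ : φ ≠ 0 := fun h => by simp [h] at hw₀
    have := Module.Dual.finrank_ker_add_one_of_ne_zero hφ
    omega
  let b := Module.finBasisOfFinrankEq K _ hker
  have hli : ∀ (r : K), ∀ x ∈ LinearMap.ker φ, r • w₀ + x = 0 → r = 0 := by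
    intro r x hx h
    simpa [hw₀, LinearMap.mem_ker.1 hx] using congrArg φ h
  have hsp : ∀ z : W, ∃ r : K, z + r • w₀ ∈ LinearMap.ker φ :=
    fun z => ⟨-φ z, by simp [hw₀]⟩
  exact ⟨Module.Basis.mkFinCons w₀ b hli hsp, by simp [Module.Basis.coe_mkFinCons],
    fun j => by simp [Module.Basis.coe_mkFinCons]⟩

section Contraction

variable {R M : Type*} [CommRing R] [AddCommGroup M] [Module R M]

/-- `d` obeys the recursion of the interior product `ι_θ` (cf. `CliffordAlgebra.contractLeft`). -/
structure IsContraction (θ : M →ₗ[R] R) (d : Module.End R (ExteriorAlgebra R M)) : Prop where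
  map_one : d 1 = 0
  map_ι_mul : ∀ m x, d (ι R m * x) = θ m • x - ι R m * d x

namespace IsContraction

variable {θ : M →ₗ[R] R} {d : Module.End R (ExteriorAlgebra R M)}

theorem map_ιMulti_eq_zero (hd : IsContraction θ d) {n : ℕ} (v : Fin n → M)
    (hv : ∀ i, θ (v i) = 0) : d (ιMulti R n v) = 0 := by
  induction n with
  | zero => simpa using hd.map_one
  | succ n ih =>
    rw [ιMulti_succ_apply, hd.map_ι_mul, hv 0, ih (Matrix.vecTail v) fun i => hv i.succ]
    simp

theorem map_ι_mul_ιMulti (hd : IsContraction θ d) (m : M) {n : ℕ} (v : Fin n → M)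
    (hv : ∀ i, θ (v i) = 0) : d (ι R m * ιMulti R n v) = θ m • ιMulti R n v := by
  rw [hd.map_ι_mul, hd.map_ιMulti_eq_zero v hv, mul_zero, sub_zero]

end IsContraction

end Contraction

theorem exists_eq_ι_mul_of_mem_mixedPiece_one {V W : Type*} [AddCommGroup V] [Module ℝ V]
    [AddCommGroup W] [Module ℝ W] {n : ℕ} (e : Module.Basis (Fin n) ℝ W)
    {π : ExteriorAlgebra ℝ (V × W)} (hπ : π ∈ mixedPiece V W 1 n) :
    ∃ x : V, π = ι ℝ (x, (0 : W)) * ιMulti ℝ n fun j => ((0 : V), e j) := by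
  induction hπ using Submodule.span_induction with
  | mem z hz =>
    obtain ⟨X, u, rfl⟩ := hz
    have hdet := AlternatingMap.apply_eq_basis_det_smul e
      ((ιMulti ℝ n).compLinearMap (LinearMap.inr ℝ V W)) u
    simp only [AlternatingMap.compLinearMap_apply, LinearMap.inr_apply] at hdet
    refine ⟨e.det u • X 0, ?_⟩
    rw [← ιMulti_apply, ← ιMulti_apply, hdet, ιMulti_succ_apply, ιMulti_zero_apply, mul_one,
      mul_smul_comm, ← smul_mul_assoc, ← map_smul, Prod.smul_mk, smul_zero]
  | zero => exact ⟨0, by rw [Prod.mk_zero_zero, map_zero, zero_mul]⟩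
  | add z₁ z₂ _ _ h₁ h₂ =>
    obtain ⟨x₁, rfl⟩ := h₁
    obtain ⟨x₂, rfl⟩ := h₂
    exact ⟨x₁ + x₂, by rw [← add_mul, ← map_add, Prod.mk_add_mk, add_zero]⟩
  | smul r z _ h =>
    obtain ⟨x, rfl⟩ := h
    exact ⟨r • x, by rw [← smul_mul_assoc, ← map_smul, Prod.smul_mk, smul_zero]⟩

/-- if `dim W = n ≥ 1`, `ρ : W → V` is a nonzero linear map, and
`π ∈ V ⊗ Λ^n W` satisfies the ρ-compatibility condition
`ι_{ρ*ξ} ι_η π = − ι_{ρ*η} ι_ξ π` for all `ξ, η ∈ V*`, then `π = 0`. -/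
theorem compatible_top_tensor_vanishes (V W : Type*) [AddCommGroup V] [Module ℝ V]
    [AddCommGroup W] [Module ℝ W] [FiniteDimensional ℝ W]
    (n : ℕ) (hn : Module.finrank ℝ W = n) (hn1 : 1 ≤ n)
    (ρ : W →ₗ[ℝ] V) (hρ : ρ ≠ 0)
    (c : ((V × W) →ₗ[ℝ] ℝ) → Module.End ℝ (ExteriorAlgebra ℝ (V × W)))
    (hcone : ∀ θ, c θ 1 = 0)
    (hcmul : ∀ θ (m : V × W) (x : ExteriorAlgebra ℝ (V × W)),
      c θ (ExteriorAlgebra.ι ℝ m * x) = θ m • x - ExteriorAlgebra.ι ℝ m * c θ x)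
    (π : ExteriorAlgebra ℝ (V × W)) (hπ : π ∈ mixedPiece V W 1 n)
    (hcompat : ∀ ξ η : V →ₗ[ℝ] ℝ,
      c (ξ ∘ₗ ρ ∘ₗ LinearMap.snd ℝ V W) (c (η ∘ₗ LinearMap.fst ℝ V W) π)
        = - c (η ∘ₗ ρ ∘ₗ LinearMap.snd ℝ V W) (c (ξ ∘ₗ LinearMap.fst ℝ V W) π)) :
    π = 0 := by
  obtain ⟨m, rfl⟩ : ∃ m, n = m + 1 := ⟨n - 1, by omega⟩
  have hc : ∀ θ, IsContraction θ (c θ) := fun θ => ⟨hcone θ, hcmul θ⟩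
  obtain ⟨ξ₀, w₀, hξ₀⟩ := LinearMap.exists_dual_apply_eq_one_of_ne_zero hρ
  obtain ⟨e, he₀, he⟩ :=
    Module.Basis.exists_fin_succ_apply_zero_eq_of_apply_eq_one hn (φ := ξ₀ ∘ₗ ρ) hξ₀
  obtain ⟨x, rfl⟩ := exists_eq_ι_mul_of_mem_mixedPiece_one e hπ
  set Ω := ιMulti ℝ (m + 1) fun j => ((0 : V), e j)
  set Ω' := ιMulti ℝ m fun j => ((0 : V), e j.succ)
  have hΩ : Ω = ι ℝ ((0 : V), w₀) * Ω' := by simp only [Ω, Ω', ιMulti_succ_apply, he₀]; rfl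
  have hfst : ∀ η : V →ₗ[ℝ] ℝ, c (η ∘ₗ LinearMap.fst ℝ V W) (ι ℝ (x, 0) * Ω) = η x • Ω :=
    fun η => (hc _).map_ι_mul_ιMulti _ _ fun j => by simp
  have hΩ' : c (ξ₀ ∘ₗ ρ ∘ₗ LinearMap.snd ℝ V W) Ω = Ω' := by
    rw [hΩ, (hc _).map_ι_mul_ιMulti _ _ fun j => he j]
    simp [hξ₀, Ω']
  have key : ∀ η : V →ₗ[ℝ] ℝ, η x • Ω' = -(ξ₀ x • c (η ∘ₗ ρ ∘ₗ LinearMap.snd ℝ V W) Ω) := by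
    intro η
    simpa [hfst, hΩ'] using hcompat ξ₀ η
  have hξ₀x : ξ₀ x • Ω' = 0 := by
    have := IsAddTorsionFree.of_isTorsionFree ℝ (ExteriorAlgebra ℝ (V × W))
    exact self_eq_neg.mp (by simpa [hΩ'] using key ξ₀)
  suffices x = 0 ∨ Ω' = 0 by
    rcases this with rfl | h
    · rw [Prod.mk_zero_zero, map_zero, zero_mul]
    · rw [hΩ, h, mul_zero, mul_zero]
  rcases smul_eq_zero.mp hξ₀x with h | h
  · exact eq_zero_or_eq_zero_of_forall_dual_smul fun η => by rw [key, h, zero_smul, neg_zero]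
  · exact Or.inr h
end
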